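/- Let q ≥ 2 and h ≥ 1 be integers and let (b_n)_{n≥0} be the sequence with b_0 = 1 and b_n = h(q^n − 1)/(q − 1) for every n ≥ 1 (the effective divisor counts of a global function field of genus 1 and class number h). For every (s, w) ∈ ℂ² with Re(s + w) > 2 and Re(w) > 1, setting u = q^{−(s+w)} and v = q^{−w}, one has Σ_{0 ≤ n ≤ m} b_n b_m q^{−ns} q^{−mw} = Σ_{m=0}^{∞} b_m v^m + (h²/(q−1)²)·[ (1−qu)(1−v)(1−u)q² − (1−q²u)(1−v)(1−u)q − (1−qv)(1−q²u)(1−u)q + (1−qv)(1−q²u)(1−qu) ]·u / ((1−u)(1−qu)(1−q²u)(1−v)(1−qv)). -/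

import Mathlib

/-! Substituting `m = n + k`, the double series is `∑ₙ bₙ q^{-ns} Tₙ` with the tail
`Tₙ = ∑_{m ≥ n} b_m v^m`; the row `n = 0` is `Z(K, w)`. For `n ≥ 1` one has
`bₙ = c (qⁿ - 1)` with `c = h / (q - 1)`, so `Tₙ = c ((qv)ⁿ / (1 - qv) - vⁿ / (1 - v))`
and, as `u = q^{-s} v`, the row `bₙ q^{-ns} Tₙ` is a combination of `(q²u)ⁿ`, `(qu)ⁿ`
and `uⁿ`. Summing these geometric series gives the rational function. Absolute
convergence follows from `bₙ ≤ (h + 1) qⁿ`. -/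

open Complex

theorem hasSum_geometric_tail {K : Type*} [NormedDivisionRing K] {r : K} (hr : ‖r‖ < 1)
    (n : ℕ) :
    HasSum (fun k : ℕ ↦ r ^ (n + k)) (r ^ n * (1 - r)⁻¹) := by
  simpa only [pow_add] using (hasSum_geometric_of_norm_lt_one hr).mul_left (r ^ n)

theorem norm_lt_one_of_norm_mul_lt_one {K : Type*} [NormedDivisionRing K] {a r : K}
    (ha : 1 ≤ ‖a‖) (h : ‖a * r‖ < 1) : ‖r‖ < 1 := by
  rw [norm_mul] at h
  nlinarith [norm_nonneg r]

theorem norm_natCast_pow_mul_cpow_neg_lt_one {q : ℕ} (hq : 1 < q) {k : ℕ} {z : ℂ}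
    (hz : k < z.re) :
    ‖(q : ℂ) ^ k * (q : ℂ) ^ (-z)‖ < 1 := by
  have hq0 : (0 : ℝ) < q := by positivity
  rw [← cpow_natCast, ← cpow_add _ _ (by exact_mod_cast hq0.ne'), ← ofReal_natCast,
    norm_cpow_eq_rpow_re_of_pos hq0]
  exact Real.rpow_lt_one_of_one_lt_of_neg (by exact_mod_cast hq) (by simpa using hz)

def prodEquivSubtypeLe : ℕ × ℕ ≃ {p : ℕ × ℕ // p.1 ≤ p.2} where
  toFun p := ⟨(p.1, p.1 + p.2), Nat.le_add_right _ _⟩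
  invFun p := (p.1.1, p.1.2 - p.1.1)
  left_inv p := by simp
  right_inv := fun ⟨⟨n, m⟩, hnm⟩ ↦ by simp [Nat.add_sub_cancel' hnm]

theorem tsum_subtype_le_eq_tsum_tsum {E : Type*} [AddCommGroup E] [UniformSpace E]
    [IsUniformAddGroup E] [CompleteSpace E] [T0Space E] {f : ℕ → ℕ → E}
    (hf : Summable fun p : ℕ × ℕ ↦ f p.1 (p.1 + p.2)) :
    ∑' p : {p : ℕ × ℕ // p.1 ≤ p.2}, f p.1.1 p.1.2 = ∑' (n) (k), f n (n + k) := by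
  rw [← prodEquivSubtypeLe.tsum_eq]
  exact hf.tsum_prod

namespace GenusOne

variable {q h : ℕ} {b : ℕ → ℕ}

theorem natCast_eq_mul_pow_sub_one (hq : 1 < q)
    (hb : ∀ n, 1 ≤ n → b n * (q - 1) = h * (q ^ n - 1))
    {n : ℕ} (hn : 1 ≤ n) : (b n : ℂ) = h / (q - 1) * ((q : ℂ) ^ n - 1) := by
  have hq1 : (q : ℂ) - 1 ≠ 0 := sub_ne_zero.mpr (by exact_mod_cast hq.ne')
  have hbn := congrArg (Nat.cast : ℕ → ℂ) (hb n hn)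
  push_cast [Nat.cast_sub hq.le, Nat.cast_sub (Nat.one_le_pow n q (by omega))] at hbn
  field_simp
  exact hbn

theorem le_succ_mul_pow (hq : 1 < q) (hb0 : b 0 = 1)
    (hb : ∀ n, 1 ≤ n → b n * (q - 1) = h * (q ^ n - 1)) (n : ℕ) :
    b n ≤ (h + 1) * q ^ n := by
  rcases Nat.eq_zero_or_pos n with rfl | hn
  · simp [hb0]
  · have : b n * (q - 1) ≤ (h + 1) * q ^ n * (q - 1) := by
      rw [hb n hn]
      calc h * (q ^ n - 1) ≤ (h + 1) * (q ^ n * 1) := by gcongr <;> omega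
        _ ≤ (h + 1) * q ^ n * (q - 1) := by rw [mul_assoc]; gcongr; omega
    exact Nat.le_of_mul_le_mul_right this (by omega)

theorem hasSum_zeta_tail (hq : 1 < q) (hb : ∀ n, 1 ≤ n → b n * (q - 1) = h * (q ^ n - 1))
    {v : ℂ} (hv : ‖(q : ℂ) * v‖ < 1) {n : ℕ} (hn : 1 ≤ n) :
    HasSum (fun k ↦ (b (n + k) : ℂ) * v ^ (n + k))
      (h / (q - 1) * (((q : ℂ) * v) ^ n * (1 - q * v)⁻¹ - v ^ n * (1 - v)⁻¹)) := by
  have hv' : ‖v‖ < 1 := norm_lt_one_of_norm_mul_lt_one (by simpa using hq.le) hv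
  refine ((hasSum_geometric_tail hv n).sub (hasSum_geometric_tail hv' n)).mul_left _
    |>.congr_fun fun k ↦ ?_
  rw [natCast_eq_mul_pow_sub_one hq hb (by omega), mul_pow]
  ring

theorem summable_doubleZeta_terms (hq : 1 < q) (hb0 : b 0 = 1)
    (hb : ∀ n, 1 ≤ n → b n * (q - 1) = h * (q ^ n - 1)) {X v : ℂ}
    (hXv : ‖(q : ℂ) ^ 2 * (X * v)‖ < 1) (hv : ‖(q : ℂ) * v‖ < 1) :
    Summable fun p : ℕ × ℕ ↦ (b p.1 : ℂ) * b (p.1 + p.2) * X ^ p.1 * v ^ (p.1 + p.2) := by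
  have hbq (n : ℕ) : (b n : ℝ) ≤ (h + 1) * q ^ n := by
    exact_mod_cast le_succ_mul_pow hq hb0 hb n
  refine Summable.of_norm_bounded (g := fun p : ℕ × ℕ ↦
      ((h + 1) ^ 2 * ‖(q : ℂ) ^ 2 * (X * v)‖ ^ p.1) * ‖(q : ℂ) * v‖ ^ p.2) ?_ ?_
  · exact Summable.mul_of_nonneg
      ((summable_geometric_of_lt_one (norm_nonneg _) hXv).mul_left _)
      (summable_geometric_of_lt_one (norm_nonneg _) hv) (fun _ ↦ by positivity)
      (fun _ ↦ by positivity)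
  · rintro ⟨n, k⟩
    simp only [norm_mul, norm_pow, norm_natCast]
    calc _ = ((b n : ℝ) * ‖X‖ ^ n) * ((b (n + k) : ℝ) * ‖v‖ ^ (n + k)) := by ring
      _ ≤ ((h + 1) * q ^ n * ‖X‖ ^ n) * ((h + 1) * q ^ (n + k) * ‖v‖ ^ (n + k)) := by
        gcongr <;> exact hbq _
      _ = _ := by ring

theorem tsum_subtype_le_eq_zeta_add (hq : 1 < q) (hb0 : b 0 = 1)
    (hb : ∀ n, 1 ≤ n → b n * (q - 1) = h * (q ^ n - 1)) {X u v : ℂ} (hu : u = X * v)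
    (hqqu : ‖(q : ℂ) ^ 2 * u‖ < 1) (hqv : ‖(q : ℂ) * v‖ < 1) :
    ∑' p : {p : ℕ × ℕ // p.1 ≤ p.2}, (b p.1.1 : ℂ) * b p.1.2 * X ^ p.1.1 * v ^ p.1.2 =
      ∑' m, (b m : ℂ) * v ^ m + (h / (q - 1)) ^ 2 *
        ((1 - q * v)⁻¹ * ((q : ℂ) ^ 2 * u * (1 - q ^ 2 * u)⁻¹ - q * u * (1 - q * u)⁻¹) -
          (1 - v)⁻¹ * (q * u * (1 - q * u)⁻¹ - u * (1 - u)⁻¹)) := by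
  have hq1 : (1 : ℝ) ≤ ‖(q : ℂ)‖ := by simpa using hq.le
  have hqu : ‖(q : ℂ) * u‖ < 1 :=
    norm_lt_one_of_norm_mul_lt_one hq1 (by rwa [← mul_assoc, ← sq])
  have hu1 : ‖u‖ < 1 := norm_lt_one_of_norm_mul_lt_one hq1 hqu
  have hF := summable_doubleZeta_terms hq hb0 hb (hu ▸ hqqu) hqv
  have hrow (n : ℕ) : ∑' k, (b (n + 1) : ℂ) * b (n + 1 + k) * X ^ (n + 1) * v ^ (n + 1 + k) =
      (h / (q - 1)) ^ 2 * ((1 - q * v)⁻¹ * (((q : ℂ) ^ 2 * u) ^ (1 + n) - (q * u) ^ (1 + n)) -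
        (1 - v)⁻¹ * ((q * u) ^ (1 + n) - u ^ (1 + n))) := by
    have hn : 1 ≤ n + 1 := Nat.le_add_left 1 n
    rw [((hasSum_zeta_tail hq hb hqv hn).mul_left ((b (n + 1) : ℂ) * X ^ (n + 1))
      |>.congr_fun fun k ↦ by ring).tsum_eq, natCast_eq_mul_pow_sub_one hq hb hn, hu,
      add_comm 1 n]
    ring
  rw [tsum_subtype_le_eq_tsum_tsum (f := fun n m ↦ (b n : ℂ) * b m * X ^ n * v ^ m) hF,
    hF.prod.tsum_eq_zero_add]
  congr 1
  · simp [hb0]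
  · rw [tsum_congr hrow]
    refine HasSum.tsum_eq (HasSum.mul_left _ ?_)
    simpa only [pow_one] using
      (((hasSum_geometric_tail hqqu 1).sub (hasSum_geometric_tail hqu 1)).mul_left _).sub
        (((hasSum_geometric_tail hqu 1).sub (hasSum_geometric_tail hu1 1)).mul_left _)

end GenusOne

theorem double_zeta_genus_one_decomposition_general
    (q h : ℕ) (hq : 2 ≤ q)
    (b : ℕ → ℕ) (hb0 : b 0 = 1)
    (hb : ∀ n : ℕ, 1 ≤ n → b n * (q - 1) = h * (q ^ n - 1))
    (s w : ℂ) (h1 : 2 < (s + w).re) (h2 : 1 < w.re)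
    (u v : ℂ) (hu : u = (q : ℂ) ^ (-(s + w))) (hv : v = (q : ℂ) ^ (-w)) :
    (∑' p : {p : ℕ × ℕ // p.1 ≤ p.2},
        (b p.1.1 : ℂ) * (b p.1.2 : ℂ) *
          (q : ℂ) ^ (-(p.1.1 : ℂ) * s) * (q : ℂ) ^ (-(p.1.2 : ℂ) * w)) =
    (∑' m : ℕ, (b m : ℂ) * v ^ m) +
      (h : ℂ) ^ 2 / ((q : ℂ) - 1) ^ 2 *
        ((1 - (q : ℂ) * u) * (1 - v) * (1 - u) * (q : ℂ) ^ 2 -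
          (1 - (q : ℂ) ^ 2 * u) * (1 - v) * (1 - u) * (q : ℂ) -
          (1 - (q : ℂ) * v) * (1 - (q : ℂ) ^ 2 * u) * (1 - u) * (q : ℂ) +
          (1 - (q : ℂ) * v) * (1 - (q : ℂ) ^ 2 * u) * (1 - (q : ℂ) * u)) *
        u /
        ((1 - u) * (1 - (q : ℂ) * u) * (1 - (q : ℂ) ^ 2 * u) * (1 - v) *
          (1 - (q : ℂ) * v)) := by
  have hq1 : 1 < q := hq
  have hu' : u = (q : ℂ) ^ (-s) * v := by
    rw [hu, hv, neg_add, cpow_add _ _ (by exact_mod_cast (zero_lt_one.trans hq1).ne')]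
  have hlt {k : ℕ} {z : ℂ} (hz : k < z.re) := norm_natCast_pow_mul_cpow_neg_lt_one hq1 hz
  have hu1 : ‖u‖ < 1 := by
    rw [hu]; simpa using hlt (k := 0) (z := s + w) (by push_cast; linarith)
  have hqu : ‖(q : ℂ) * u‖ < 1 := by
    rw [hu]; simpa using hlt (k := 1) (z := s + w) (by push_cast; linarith)
  have hqqu : ‖(q : ℂ) ^ 2 * u‖ < 1 := by rw [hu]; simpa using hlt (k := 2) (z := s + w) h1
  have hv1 : ‖v‖ < 1 := by rw [hv]; simpa using hlt (k := 0) (z := w) (by push_cast; linarith)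
  have hqv : ‖(q : ℂ) * v‖ < 1 := by
    rw [hv]; simpa using hlt (k := 1) (z := w) (by simpa using h2)
  have hne {r : ℂ} (hr : ‖r‖ < 1) : 1 - r ≠ 0 := (isUnit_one_sub_of_norm_lt_one hr).ne_zero
  have hpow (n : ℕ) (z : ℂ) : (q : ℂ) ^ (-(n : ℂ) * z) = ((q : ℂ) ^ (-z)) ^ n := by
    rw [neg_mul, ← mul_neg, cpow_nat_mul]
  simp only [hpow, ← hv]
  rw [GenusOne.tsum_subtype_le_eq_zeta_add hq1 hb0 hb hu' hqqu hqv, div_pow]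
  congr 1
  field_simp [hne hu1, hne hqu, hne hqqu, hne hv1, hne hqv]
  ring

/-- Let `q ≥ 2`, `h ≥ 1` and `(b_n)` the sequence with `b_0 = 1`
and `b_n = h(q^n − 1)/(q − 1)` for `n ≥ 1` (genus-one effective divisor
counts). For `Re(s+w) > 2`, `Re(w) > 1`, with `u = q^{−(s+w)}` and
`v = q^{−w}`, the double zeta function equals `Z(K, w)` plus the explicit
rational function in `u` and `v` of the paper. -/
theorem double_zeta_genus_one_decomposition
    (q h : ℕ) (hq : 2 ≤ q) (hh : 1 ≤ h)
    (b : ℕ → ℕ) (hb0 : b 0 = 1)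
    (hb : ∀ n : ℕ, 1 ≤ n → b n * (q - 1) = h * (q ^ n - 1))
    (s w : ℂ) (h1 : 2 < (s + w).re) (h2 : 1 < w.re)
    (u v : ℂ) (hu : u = (q : ℂ) ^ (-(s + w))) (hv : v = (q : ℂ) ^ (-w)) :
    (∑' p : {p : ℕ × ℕ // p.1 ≤ p.2},
        (b p.1.1 : ℂ) * (b p.1.2 : ℂ) *
          (q : ℂ) ^ (-(p.1.1 : ℂ) * s) * (q : ℂ) ^ (-(p.1.2 : ℂ) * w)) =
    (∑' m : ℕ, (b m : ℂ) * v ^ m) +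
      (h : ℂ) ^ 2 / ((q : ℂ) - 1) ^ 2 *
        ((1 - (q : ℂ) * u) * (1 - v) * (1 - u) * (q : ℂ) ^ 2 -
          (1 - (q : ℂ) ^ 2 * u) * (1 - v) * (1 - u) * (q : ℂ) -
          (1 - (q : ℂ) * v) * (1 - (q : ℂ) ^ 2 * u) * (1 - u) * (q : ℂ) +
          (1 - (q : ℂ) * v) * (1 - (q : ℂ) ^ 2 * u) * (1 - (q : ℂ) * u)) *
        u /
        ((1 - u) * (1 - (q : ℂ) * u) * (1 - (q : ℂ) ^ 2 * u) * (1 - v) *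
          (1 - (q : ℂ) * v)) :=
  double_zeta_genus_one_decomposition_general q h hq b hb0 hb s w h1 h2 u v hu hv
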